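/- (Bhattacharya–Ranga Rao bound.) For any distribution function F of a real random variable with zero mean and unit variance, sup_{x∈ℝ} |F(x) − Φ(x)| ≤ sup_{x>0} (Φ(x) − x²/(1+x²)) = 0.54093654…. -/

import Mathlib

/-!
Let `F(x) = μ(-∞, x)`. For `x > 0` one has `F(x) - Φ(x) ≤ 1 - Φ(0) = 1/2`, while Cantelli's
one-sided inequality `μ[x, ∞) ≤ 1/(1 + x²)` gives `Φ(x) - F(x) ≤ Φ(x) - x²/(1 + x²)`; the case
`x < 0` is symmetric through `Φ(-x) = 1 - Φ(x)`. The trivial bound `1/2` is below the supremum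
because `Φ(y) - 1/2` grows linearly near `0` while `y²/(1 + y²)` is quadratic.
-/

open MeasureTheory

/-- The standard normal distribution function `Φ`. -/
noncomputable def stdGaussianCDF (x : ℝ) : ℝ :=
  ∫ t in Set.Iic x, (Real.sqrt (2 * Real.pi))⁻¹ * Real.exp (-t ^ 2 / 2)

open ProbabilityTheory Set

/-- **Cantelli's inequality**. -/
theorem measureReal_ge_le_variance_div_add_sq {Ω : Type*} [MeasurableSpace Ω] {μ : Measure Ω}
    [IsProbabilityMeasure μ] {X : Ω → ℝ} (hX : MemLp X 2 μ) {t : ℝ} (ht : 0 < t) :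
    μ.real {ω | t ≤ X ω - μ[X]} ≤ Var[X; μ] / (Var[X; μ] + t ^ 2) := by
  set v := Var[X; μ]
  set s := v / t
  have hs : 0 ≤ s := div_nonneg (variance_nonneg X μ) ht.le
  -- Markov's inequality for `(X - E X + s)²`, with the shift `s = v / t` chosen optimally.
  set Z : Ω → ℝ := fun ω ↦ X ω - μ[X] + s
  have hZ : MemLp Z 2 μ := (hX.sub (memLp_const _)).add (memLp_const _)
  have hZ_mean : μ[Z] = s := by
    have hXi := hX.integrable one_le_two
    rw [integral_add (f := fun ω ↦ X ω - μ[X]) (hXi.sub (integrable_const _)) (integrable_const _),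
      integral_sub hXi (integrable_const _)]
    simp
  have hZ_var : Var[Z; μ] = v := by
    rw [variance_add_const (X := fun ω ↦ X ω - μ[X])
      (hX.aestronglyMeasurable.sub aestronglyMeasurable_const),
      variance_sub_const hX.aestronglyMeasurable]
  have hZ_sq : μ[Z ^ 2] = v + s ^ 2 := by
    rw [← hZ_var, variance_eq_sub hZ, hZ_mean]
    ring
  have hmarkov := mul_meas_ge_le_integral_of_nonneg (.of_forall fun ω ↦ sq_nonneg (Z ω))
    hZ.integrable_sq ((t + s) ^ 2)
  have hsub : {ω | t ≤ X ω - μ[X]} ⊆ {ω | (t + s) ^ 2 ≤ Z ω ^ 2} := fun ω hω ↦ by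
    simp only [mem_ofPred_eq, Z] at hω ⊢
    nlinarith
  have hpos : 0 < (t + s) ^ 2 := by positivity
  calc μ.real {ω | t ≤ X ω - μ[X]} ≤ μ.real {ω | (t + s) ^ 2 ≤ Z ω ^ 2} := measureReal_mono hsub
    _ ≤ (v + s ^ 2) / (t + s) ^ 2 := by
      rw [le_div_iff₀ hpos, mul_comm, ← hZ_sq]
      exact hmarkov
    _ = v / (v + t ^ 2) := by
      simp only [s]
      field_simp
      ring

lemma stdGaussianCDF_eq_integral (x : ℝ) :
    stdGaussianCDF x = ∫ t in Iic x, gaussianPDFReal 0 1 t := by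
  simp [stdGaussianCDF, gaussianPDFReal_def]

lemma monotone_stdGaussianCDF : Monotone stdGaussianCDF := fun x y hxy ↦ by
  simp only [stdGaussianCDF_eq_integral]
  exact setIntegral_mono_set (integrable_gaussianPDFReal 0 1).integrableOn
    (.of_forall (gaussianPDFReal_nonneg 0 1)) (Iic_subset_Iic.mpr hxy).eventuallyLE

lemma stdGaussianCDF_neg (x : ℝ) : stdGaussianCDF (-x) = 1 - stdGaussianCDF x := by
  have hφ := integrable_gaussianPDFReal 0 1
  rw [stdGaussianCDF_eq_integral, stdGaussianCDF_eq_integral,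
    ← integral_gaussianPDFReal_eq_one 0 one_ne_zero,
    ← intervalIntegral.integral_Iic_add_Ioi (hφ.integrableOn (s := Iic x)) hφ.integrableOn,
    ← neg_neg x, ← integral_comp_neg_Iic]
  simp [gaussianPDFReal_def]

lemma stdGaussianCDF_zero : stdGaussianCDF 0 = 1 / 2 := by
  linarith [neg_zero (G := ℝ) ▸ stdGaussianCDF_neg 0]

lemma stdGaussianCDF_le_one (x : ℝ) : stdGaussianCDF x ≤ 1 := by
  rw [stdGaussianCDF_eq_integral, ← integral_gaussianPDFReal_eq_one 0 one_ne_zero]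
  exact setIntegral_le_integral (integrable_gaussianPDFReal 0 1)
    (.of_forall (gaussianPDFReal_nonneg 0 1))

lemma one_div_six_le_gaussianPDFReal {t : ℝ} (ht : |t| ≤ 1) : 1 / 6 ≤ gaussianPDFReal 0 1 t := by
  have hsqrt : √(2 * Real.pi) ≤ 3 :=
    Real.sqrt_le_iff.mpr ⟨by norm_num, by nlinarith [Real.pi_le_four]⟩
  have hexp : 1 / 2 ≤ Real.exp (-t ^ 2 / 2) := by
    nlinarith [Real.add_one_le_exp (-t ^ 2 / 2), sq_abs t, abs_nonneg t]
  have hinv : 1 / 3 ≤ (√(2 * Real.pi))⁻¹ := by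
    rw [one_div]; exact inv_anti₀ (by positivity) hsqrt
  simp only [gaussianPDFReal_def, NNReal.coe_one, mul_one, sub_zero]
  nlinarith

lemma half_add_div_six_le_stdGaussianCDF {y : ℝ} (hy₀ : 0 ≤ y) (hy₁ : y ≤ 1) :
    1 / 2 + y / 6 ≤ stdGaussianCDF y := by
  have hφ := integrable_gaussianPDFReal 0 1
  have hdiff : stdGaussianCDF y - stdGaussianCDF 0 = ∫ t in (0)..y, gaussianPDFReal 0 1 t := by
    simp only [stdGaussianCDF_eq_integral]
    exact intervalIntegral.integral_Iic_sub_Iic hφ.integrableOn hφ.integrableOn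
  have hlow : ∫ _ in (0)..y, (1 / 6 : ℝ) ≤ ∫ t in (0)..y, gaussianPDFReal 0 1 t :=
    intervalIntegral.integral_mono_on hy₀ intervalIntegrable_const hφ.intervalIntegrable
      fun t ht ↦ one_div_six_le_gaussianPDFReal (abs_le.mpr ⟨by linarith [ht.1], ht.2.trans hy₁⟩)
  simp only [intervalIntegral.integral_const, sub_zero, smul_eq_mul] at hlow
  linarith [stdGaussianCDF_zero]

section StandardizedLaw

variable {μ : Measure ℝ} [IsProbabilityMeasure μ]

lemma one_sub_inv_one_add_sq_le_measureReal_Iio (hX : MemLp (fun x ↦ x) 2 μ) (hmean : ∫ x, x ∂μ = 0)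
    (hvar : Var[fun x ↦ x; μ] = 1) {x : ℝ} (hx : 0 < x) :
    1 - (1 + x ^ 2)⁻¹ ≤ μ.real (Iio x) := by
  have htail := measureReal_ge_le_variance_div_add_sq hX hx
  simp only [hmean, hvar, sub_zero, one_div] at htail
  rw [← compl_Ici, probReal_compl_eq_one_sub measurableSet_Ici]
  change μ.real (Ici x) ≤ (1 + x ^ 2)⁻¹ at htail
  linarith

lemma measureReal_Iio_le_inv_one_add_sq (hX : MemLp (fun x ↦ x) 2 μ) (hmean : ∫ x, x ∂μ = 0)
    (hvar : Var[fun x ↦ x; μ] = 1) {x : ℝ} (hx : x < 0) :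
    μ.real (Iio x) ≤ (1 + x ^ 2)⁻¹ := by
  have htail := measureReal_ge_le_variance_div_add_sq (X := fun ω ↦ -ω) hX.neg (neg_pos.mpr hx)
  rw [integral_neg, hmean, variance_fun_neg, hvar, neg_sq] at htail
  simp only [neg_zero, sub_zero, one_div] at htail
  calc μ.real (Iio x) ≤ μ.real {ω | -x ≤ -ω} :=
        measureReal_mono fun ω hω ↦ by simp only [mem_Iio, mem_ofPred_eq] at *; linarith
    _ ≤ (1 + x ^ 2)⁻¹ := htail

end StandardizedLaw

noncomputable def bhattacharyaRangaRaoConstant : ℝ :=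
  ⨆ y : Ioi (0 : ℝ), (stdGaussianCDF y - (y : ℝ) ^ 2 / (1 + (y : ℝ) ^ 2))

lemma le_bhattacharyaRangaRaoConstant {y : ℝ} (hy : 0 < y) :
    stdGaussianCDF y - 1 + (1 + y ^ 2)⁻¹ ≤ bhattacharyaRangaRaoConstant := by
  have hbdd : BddAbove (range fun y : Ioi (0 : ℝ) ↦
      stdGaussianCDF y - (y : ℝ) ^ 2 / (1 + (y : ℝ) ^ 2)) := by
    refine ⟨1, forall_mem_range.mpr fun y ↦ ?_⟩
    have : 0 ≤ (y : ℝ) ^ 2 / (1 + (y : ℝ) ^ 2) := by positivity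
    linarith [stdGaussianCDF_le_one y]
  calc stdGaussianCDF y - 1 + (1 + y ^ 2)⁻¹ = stdGaussianCDF y - y ^ 2 / (1 + y ^ 2) := by
        field_simp; ring
    _ ≤ bhattacharyaRangaRaoConstant := le_ciSup hbdd ⟨y, hy⟩

lemma half_le_bhattacharyaRangaRaoConstant : 1 / 2 ≤ bhattacharyaRangaRaoConstant := by
  have := le_bhattacharyaRangaRaoConstant (y := 1 / 10) (by norm_num)
  linarith [half_add_div_six_le_stdGaussianCDF (y := 1 / 10) (by norm_num) (by norm_num)]

theorem bhattacharya_ranga_rao_general (μ : Measure ℝ) [IsProbabilityMeasure μ]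
    (hint2 : Integrable (fun x : ℝ => x ^ 2) μ)
    (hmean : ∫ x, x ∂μ = 0) (hvar : ∫ x, x ^ 2 ∂μ = 1) (x : ℝ) :
    |(μ (Set.Iio x)).toReal - stdGaussianCDF x| ≤
      ⨆ y : Set.Ioi (0 : ℝ), (stdGaussianCDF y - (y : ℝ) ^ 2 / (1 + (y : ℝ) ^ 2)) := by
  have hX : MemLp (fun x : ℝ ↦ x) 2 μ :=
    (memLp_two_iff_integrable_sq aestronglyMeasurable_id).mpr hint2
  have hV : Var[fun x ↦ x; μ] = 1 := by
    rw [variance_eq_sub hX]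
    simp [hmean, hvar]
  change |μ.real (Iio x) - stdGaussianCDF x| ≤ bhattacharyaRangaRaoConstant
  have hhalf := half_le_bhattacharyaRangaRaoConstant
  have hF₀ : 0 ≤ μ.real (Iio x) := measureReal_nonneg
  have hF₁ : μ.real (Iio x) ≤ 1 := measureReal_le_one
  rw [abs_sub_le_iff]
  rcases lt_trichotomy x 0 with hx | rfl | hx
  · have hF := measureReal_Iio_le_inv_one_add_sq hX hmean hV hx
    have hM := le_bhattacharyaRangaRaoConstant (neg_pos.mpr hx)
    rw [stdGaussianCDF_neg, neg_sq] at hM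
    have hΦ : stdGaussianCDF x ≤ 1 / 2 := stdGaussianCDF_zero ▸ monotone_stdGaussianCDF hx.le
    constructor <;> linarith
  · rw [stdGaussianCDF_zero]
    constructor <;> linarith
  · have hF := one_sub_inv_one_add_sq_le_measureReal_Iio hX hmean hV hx
    have hM := le_bhattacharyaRangaRaoConstant hx
    have hΦ : 1 / 2 ≤ stdGaussianCDF x := stdGaussianCDF_zero ▸ monotone_stdGaussianCDF hx.le
    constructor <;> linarith

/-- Bhattacharya–Ranga Rao bound: for any distribution `F` of a real random variable with
zero mean and unit variance, `sup_x |F(x) − Φ(x)| ≤ sup_{x>0} (Φ(x) − x²/(1+x²))`. -/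
theorem bhattacharya_ranga_rao (μ : Measure ℝ) [IsProbabilityMeasure μ]
    (hint1 : Integrable (fun x : ℝ => x) μ)
    (hint2 : Integrable (fun x : ℝ => x ^ 2) μ)
    (hmean : ∫ x, x ∂μ = 0) (hvar : ∫ x, x ^ 2 ∂μ = 1) (x : ℝ) :
    |(μ (Set.Iio x)).toReal - stdGaussianCDF x| ≤
      ⨆ y : Set.Ioi (0 : ℝ), (stdGaussianCDF y - (y : ℝ) ^ 2 / (1 + (y : ℝ) ^ 2)) :=
  bhattacharya_ranga_rao_general μ hint2 hmean hvar x
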